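/- arXiv:1312.3924 — 2 statements merged into one kernel-verified Lean document; each statement's English description precedes it below -/
import Mathlib

section
/- With the hypotheses of the displacement-commutator setup (φ, ψ bijections of X supported in A, h a bijection with h(A) ∩ A = ∅, θ = φ ∘ h⁻¹ ∘ φ⁻¹ ∘ h), one has φ⁻¹ ∘ ψ ∘ φ = θ⁻¹ ∘ ψ ∘ θ, and hence [φ, ψ] = [θ, ψ] where [a,b] = b⁻¹ ∘ a⁻¹ ∘ b ∘ a. -/
/-- The commutator `[a,b] = b⁻¹ ∘ a⁻¹ ∘ b ∘ a`. -/
def groupComm {G : Type*} [Group G] (a b : G) : G := b⁻¹ * a⁻¹ * b * a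

/-- If `φ` and `ψ` are bijections of `X` supported in `A` (they and their
inverses fix the complement of `A` pointwise), `h` is a bijection with
`h(A) ∩ A = ∅`, and `θ = φ ∘ h⁻¹ ∘ φ⁻¹ ∘ h`, then
`φ⁻¹ ∘ ψ ∘ φ = θ⁻¹ ∘ ψ ∘ θ` and hence `[φ, ψ] = [θ, ψ]`. -/
theorem commutator_eq_commutator {X : Type*} (A : Set X)
    (φ ψ h : Equiv.Perm X)
    (hφ : ∀ x ∉ A, φ x = x) (hφinv : ∀ x ∉ A, φ⁻¹ x = x)
    (hψ : ∀ x ∉ A, ψ x = x) (hψinv : ∀ x ∉ A, ψ⁻¹ x = x)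
    (hdisp : (h '' A) ∩ A = ∅)
    (θ : Equiv.Perm X) (hθ : θ = φ * h⁻¹ * φ⁻¹ * h) :
    φ⁻¹ * ψ * φ = θ⁻¹ * ψ * θ ∧ groupComm φ ψ = groupComm θ ψ := by
  have hA : ∀ x ∈ A, h x ∉ A := fun x hx hc =>
    Set.eq_empty_iff_forall_notMem.mp hdisp (h x) ⟨⟨x, hx, rfl⟩, hc⟩
  set c : Equiv.Perm X := h⁻¹ * φ⁻¹ * h with hc
  set g : Equiv.Perm X := φ⁻¹ * ψ * φ with hg
  -- g fixes the complement of A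
  have hgfix : ∀ x ∉ A, g x = x := by
    intro x hx
    simp only [hg, Equiv.Perm.mul_apply]
    rw [hφ x hx, hψ x hx, hφinv x hx]
  have hginvfix : ∀ x ∉ A, g⁻¹ x = x := by
    intro x hx
    have : g x = x := hgfix x hx
    conv_lhs => rw [← this]
    simp
  -- g maps A into A
  have hgmem : ∀ x ∈ A, g x ∈ A := by
    intro x hx
    by_contra hcon
    have := hginvfix (g x) hcon
    simp at this
    rw [← this] at hcon
    exact hcon hx
  -- c fixes A pointwise, and so does c⁻¹
  have hcfix : ∀ x ∈ A, c x = x := by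
    intro x hx
    simp only [hc, Equiv.Perm.mul_apply]
    rw [hφinv (h x) (hA x hx)]
    simp
  have hcinvfix : ∀ x ∈ A, c⁻¹ x = x := by
    intro x hx
    have : c x = x := hcfix x hx
    conv_lhs => rw [← this]
    simp
  -- c x ∉ A when x ∉ A
  have hcout : ∀ x ∉ A, c x ∉ A := by
    intro x hx hcon
    have := hcinvfix (c x) hcon
    simp at this
    rw [← this] at hcon
    exact hx hcon
  have key : c⁻¹ * g * c = g := by
    ext x
    simp only [Equiv.Perm.mul_apply]
    by_cases hx : x ∈ A
    · rw [hcfix x hx, hcinvfix (g x) (hgmem x hx)]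
    · rw [hgfix (c x) (hcout x hx)]
      rw [hgfix x hx]
      simp
  have first : φ⁻¹ * ψ * φ = θ⁻¹ * ψ * θ := by
    have hθc : θ = φ * c := by rw [hθ, hc]; group
    rw [hθc]
    have : (φ * c)⁻¹ * ψ * (φ * c) = c⁻¹ * (φ⁻¹ * ψ * φ) * c := by group
    rw [this, ← hg, key, hg]
  refine ⟨first, ?_⟩
  unfold groupComm
  have h1 : ψ⁻¹ * φ⁻¹ * ψ * φ = ψ⁻¹ * (φ⁻¹ * ψ * φ) := by group
  have h2 : ψ⁻¹ * θ⁻¹ * ψ * θ = ψ⁻¹ * (θ⁻¹ * ψ * θ) := by group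
  rw [h1, h2, first]
end

section
/- Uniqueness-of-limits from positive displacement energy: let G be a group of homeomorphisms of a compact metric space M with a norm ‖·‖ such that every non-empty open set B has e_s(B) = inf{‖g‖ : g ∈ G, g(B) ∩ B = ∅} > 0. If φₙ ∈ G converge uniformly to a homeomorphism φ, ψ ∈ G, and ‖φₙ⁻¹ ∘ ψ‖ → 0, then φ = ψ. -/
/-- Uniqueness of limits from positive displacement energy: let `G` be a group
of homeomorphisms of a compact metric space `M` (a set of homeomorphisms
closed under composition and inverse) with a norm `‖·‖` such that every
non-empty open set `B` has positive displacement energy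
`e_s(B) = inf {‖g‖ : g ∈ G, g(B) ∩ B = ∅} > 0` (equivalently, there is `c > 0`
bounding `‖g‖` from below over all `g ∈ G` displacing `B`).  If `φₙ ∈ G`
converge uniformly to a homeomorphism `φ`, `ψ ∈ G`, and `‖φₙ⁻¹ ∘ ψ‖ → 0`,
then `φ = ψ`.  Here `φₙ⁻¹ ∘ ψ` is the homeomorphism `ψ.trans (φₙ).symm`,
i.e. `x ↦ φₙ⁻¹(ψ(x))`. -/
theorem limit_unique_of_displacement_energy_pos {M : Type*} [MetricSpace M]
    [CompactSpace M] (G : Set (M ≃ₜ M))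
    (hmul : ∀ f ∈ G, ∀ g ∈ G, f.trans g ∈ G) (hinv : ∀ f ∈ G, f.symm ∈ G)
    (N : (M ≃ₜ M) → ℝ)
    (hpos : ∀ B : Set M, IsOpen B → B.Nonempty →
      ∃ c > (0 : ℝ), ∀ g ∈ G, (g '' B) ∩ B = ∅ → c ≤ N g)
    (φn : ℕ → M ≃ₜ M) (hφn : ∀ n, φn n ∈ G) (ψ : M ≃ₜ M) (hψ : ψ ∈ G)
    (φ : M ≃ₜ M)
    (hconv : TendstoUniformly (fun n => ⇑(φn n)) (⇑φ) Filter.atTop)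
    (hnorm : Filter.Tendsto (fun n => N (ψ.trans (φn n).symm))
      Filter.atTop (nhds 0)) :
    φ = ψ := by
  by_contra hne
  have hx : ∃ x : M, φ x ≠ ψ x := by
    by_contra h'
    push_neg at h'
    exact hne (Homeomorph.ext h')
  obtain ⟨x, hx⟩ := hx
  set δ := dist (ψ x) (φ x) with hδdef
  have hδ : 0 < δ := dist_pos.2 fun h => hx h.symm
  -- continuity of ψ and φ at x
  obtain ⟨r1, hr1, hψr⟩ := Metric.continuousAt_iff.1 ψ.continuous.continuousAt (δ/4) (by linarith)
  obtain ⟨r2, hr2, hφr⟩ := Metric.continuousAt_iff.1 φ.continuous.continuousAt (δ/4) (by linarith)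
  set r := min r1 r2 with hrdef
  have hr : 0 < r := lt_min hr1 hr2
  obtain ⟨c, hc, hcle⟩ := hpos (Metric.ball x r) Metric.isOpen_ball
    ⟨x, Metric.mem_ball_self hr⟩
  have h1 : ∀ᶠ n in Filter.atTop, N (ψ.trans (φn n).symm) < c :=
    hnorm.eventually (gt_mem_nhds hc)
  have h2 : ∀ᶠ n in Filter.atTop, ∀ z : M, dist (φ z) (φn n z) < δ/4 :=
    Metric.tendstoUniformly_iff.1 hconv (δ/4) (by linarith)
  obtain ⟨n, hn1, hn2⟩ := (h1.and h2).exists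
  have hg : (ψ.trans (φn n).symm) ∈ G := hmul ψ hψ (φn n).symm (hinv _ (hφn n))
  have hdisj : ((ψ.trans (φn n).symm) '' Metric.ball x r) ∩ Metric.ball x r = ∅ := by
    rw [Set.eq_empty_iff_forall_notMem]
    rintro z ⟨⟨y, hy, hyz⟩, hz⟩
    have hψy : ψ y = φn n z := by
      have := congrArg (φn n) hyz
      simpa using this
    have e1 : dist (ψ y) (ψ x) < δ/4 :=
      hψr (lt_of_lt_of_le hy (min_le_left _ _))
    have e2 : dist (φ z) (φ x) < δ/4 :=
      hφr (lt_of_lt_of_le hz (min_le_right _ _))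
    have e3 : dist (φ z) (φn n z) < δ/4 := hn2 z
    have : δ ≤ dist (ψ x) (ψ y) + dist (ψ y) (φn n z) + dist (φn n z) (φ z) + dist (φ z) (φ x) := by
      calc δ = dist (ψ x) (φ x) := rfl
        _ ≤ dist (ψ x) (φ z) + dist (φ z) (φ x) := dist_triangle _ _ _
        _ ≤ (dist (ψ x) (φn n z) + dist (φn n z) (φ z)) + dist (φ z) (φ x) := by
            gcongr; exact dist_triangle _ _ _
        _ ≤ (dist (ψ x) (ψ y) + dist (ψ y) (φn n z) + dist (φn n z) (φ z)) + dist (φ z) (φ x) := by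
            gcongr; exact dist_triangle _ _ _
        _ = _ := by ring
    have e0 : dist (ψ y) (φn n z) = 0 := by rw [hψy, dist_self]
    have c1 : dist (ψ x) (ψ y) = dist (ψ y) (ψ x) := dist_comm _ _
    have c2 : dist (φn n z) (φ z) = dist (φ z) (φn n z) := dist_comm _ _
    linarith
  exact absurd (hcle _ hg hdisj) (not_le.2 hn1)
end
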